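/- Let Y ∈ C̄_n be an indecomposable object corresponding to a double limit arc. Then the graded endomorphism ring End*_{C̄_n}(Y) is isomorphic, as a graded ring, to the Laurent polynomial ring k[x^{±1}] with x concentrated in degree −1. -/

import Mathlib

/-!
Combinatorial model of the completed ∞-gon with `n` accumulation points,
and an axiomatisation of the Paquette–Yıldırım category `C̄ₙ`.
-/

open CategoryTheory CategoryTheory.Limits CategoryTheory.Pretriangulated

namespace PY

/-- Marked points of the completed ∞-gon with `n` accumulation points:
`acc i` is the `i`-th accumulation point and `pt i m` is the `m`-th marked
point in the open segment between `acc i` and `acc (i+1)`. -/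
inductive Pt (n : ℕ) : Type
  | acc (i : Fin n) : Pt n
  | pt (i : Fin n) (m : ℤ) : Pt n
deriving DecidableEq

/-- A strictly increasing embedding `ℤ → (0,1) ∩ ℚ`, used to give each marked
point a coordinate on the circle. -/
def posm (m : ℤ) : ℚ := 1/2 + (m : ℚ) / (2 * ((|m| : ℤ) + 1 : ℤ))

/-- The coordinate of a point of the completed ∞-gon on the circle of
circumference `n` (the cyclic order is read off from these coordinates). -/
def coord {n : ℕ} : Pt n → ℚ
  | .acc i => i
  | .pt i m => i + posm m

/-- Whether a point is an accumulation point. -/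
def isAcc {n : ℕ} : Pt n → Prop
  | .acc _ => True
  | .pt _ _ => False

/-- The action of the `j`-th power of the suspension functor on points:
marked points are moved to their `j`-th predecessor, accumulation points stay fixed. -/
def shiftPt {n : ℕ} (j : ℤ) : Pt n → Pt n
  | .acc i => .acc i
  | .pt i m => .pt i (m - j)

/-- Two marked points are adjacent when one is the successor of the other. -/
def Adjacent {n : ℕ} (x y : Pt n) : Prop :=
  ∃ (i : Fin n) (m : ℤ), (x = .pt i m ∧ y = .pt i (m + 1)) ∨ (x = .pt i (m + 1) ∧ y = .pt i m)

/-- (Potential) arcs: unordered pairs of points. -/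
abbrev E (n : ℕ) := Sym2 (Pt n)

/-- An arc of the completed ∞-gon: an unordered pair of distinct,
non-adjacent points. -/
def IsArc {n : ℕ} (e : E n) : Prop :=
  ¬ e.IsDiag ∧ ∀ x y : Pt n, e = s(x, y) → ¬ Adjacent x y

/-- The smaller of the two coordinates of the endpoints. -/
def lo {n : ℕ} (e : E n) : ℚ :=
  Sym2.lift ⟨fun a b => min (coord a) (coord b), fun _ _ => min_comm _ _⟩ e

/-- The larger of the two coordinates of the endpoints. -/
def hi {n : ℕ} (e : E n) : ℚ :=
  Sym2.lift ⟨fun a b => max (coord a) (coord b), fun _ _ => max_comm _ _⟩ e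

/-- Two arcs cross when their endpoints strictly interleave on the circle. -/
def Cross {n : ℕ} (e f : E n) : Prop :=
  (lo e < lo f ∧ lo f < hi e ∧ hi e < hi f) ∨ (lo f < lo e ∧ lo e < hi f ∧ hi f < hi e)

/-- The `j`-th suspension of an arc. -/
def shiftE {n : ℕ} (j : ℤ) (e : E n) : E n := e.map (shiftPt j)

/-- A limit arc: exactly one endpoint is an accumulation point. -/
def IsLimitArc {n : ℕ} (e : E n) : Prop :=
  IsArc e ∧ ∀ x y : Pt n, e = s(x, y) →
    ((isAcc x ∧ ¬ isAcc y) ∨ (¬ isAcc x ∧ isAcc y))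

/-- A double limit arc: both endpoints are accumulation points. -/
def IsDoubleLimitArc {n : ℕ} (e : E n) : Prop :=
  IsArc e ∧ ∀ x ∈ e, isAcc x

/-- Strict cyclic betweenness of three distinct coordinates on the circle,
read anticlockwise. -/
def cyc (p q r : ℚ) : Prop :=
  (p < q ∧ q < r) ∨ (q < r ∧ r < p) ∨ (r < p ∧ p < q)

/-- `RotationAbout e f` holds when `e` and `f` share exactly one accumulation
point as an endpoint, and `f` is obtained from `e` by rotating about the common
endpoint following the (anticlockwise) orientation of the circle. -/
def RotationAbout {n : ℕ} (e f : E n) : Prop :=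
  ∃ a x y : Pt n, isAcc a ∧ e = s(a, x) ∧ f = s(a, y) ∧ x ≠ y ∧
    cyc (coord a) (coord x) (coord y)

/-- The combinatorial criterion for `C̄ₙ(X, Y[1]) ≅ k` for indecomposables
`X`, `Y` with arcs `e`, `f`. -/
def ExtOne {n : ℕ} (e f : E n) : Prop :=
  Cross e f ∨ RotationAbout e f ∨ (e = f ∧ IsDoubleLimitArc e)

/-- An axiomatisation of the Paquette–Yıldırım category `C̄ₙ`:
a `k`-linear, Hom-finite, Krull–Schmidt pretriangulated category whose
indecomposable objects correspond to the arcs of the completed ∞-gon with `n`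
accumulation points, with suspension acting on arcs by moving marked endpoints
to their predecessors, and with one-dimensional `Hom(X, Y[1])` exactly when
the arcs cross, share an accumulation point in the anticlockwise-rotation
configuration, or are equal double limit arcs. -/
structure Cat (k : Type) [Field k] (n : ℕ) where
  /-- The underlying type of objects. -/
  C : Type 1
  [instCategory : Category.{1} C]
  [instPreadditive : Preadditive C]
  [instLinear : Linear k C]
  [instHasShift : HasShift C ℤ]
  [instHasZeroObject : HasZeroObject C]
  [instHasFiniteBiproducts : HasFiniteBiproducts C]
  [instShiftAdditive : ∀ i : ℤ, (shiftFunctor C i).Additive]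
  [instPretriangulated : Pretriangulated C]
  /-- Hom-finiteness. -/
  homFinite : ∀ X Y : C, FiniteDimensional k (X ⟶ Y)
  /-- The indecomposable object attached to an arc. -/
  obj : E n → C
  obj_indec : ∀ e : E n, IsArc e → Indecomposable (obj e)
  /-- Suspension acts on arcs by moving marked endpoints to predecessors. -/
  obj_shift : ∀ e : E n, IsArc e → Nonempty ((obj e)⟦(1 : ℤ)⟧ ≅ obj (shiftE 1 e))
  /-- Every indecomposable object comes from an arc. -/
  obj_surj : ∀ X : C, Indecomposable X → ∃ e : E n, IsArc e ∧ Nonempty (X ≅ obj e)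
  /-- Distinct arcs give non-isomorphic indecomposables. -/
  obj_inj : ∀ e f : E n, IsArc e → IsArc f → Nonempty (obj e ≅ obj f) → e = f
  /-- Krull–Schmidt: every object decomposes into arc objects. -/
  decomp : ∀ X : C, ∃ (m : ℕ) (f : Fin m → E n),
    (∀ j, IsArc (f j)) ∧ Nonempty (X ≅ ⨁ fun j => obj (f j))
  /-- The Hom spaces `C̄ₙ(X, Y[1])` are one-dimensional exactly in the
  combinatorial situations of `ExtOne`, and vanish otherwise. -/
  hom_one : ∀ e f : E n, IsArc e → IsArc f →
    (ExtOne e f ↔ Nonempty ((obj e ⟶ (obj f)⟦(1 : ℤ)⟧) ≃ₗ[k] k))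
  hom_dim : ∀ e f : E n, IsArc e → IsArc f →
    Module.rank k (obj e ⟶ (obj f)⟦(1 : ℤ)⟧) ≤ 1

attribute [instance] Cat.instCategory Cat.instPreadditive Cat.instLinear
  Cat.instHasShift Cat.instHasZeroObject Cat.instHasFiniteBiproducts
  Cat.instShiftAdditive Cat.instPretriangulated

variable {k : Type} [Field k] {n : ℕ}

/-- The thick subcategory generated by an object `G`: the smallest class of
objects containing `G` and closed under isomorphism, suspension, finite direct
sums, direct summands and extensions (cones of distinguished triangles). -/
inductive Thick (P : Cat k n) (G : P.C) : P.C → Prop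
  | gen : Thick P G G
  | iso {X Y : P.C} : (X ≅ Y) → Thick P G X → Thick P G Y
  | shift {X : P.C} (i : ℤ) : Thick P G X → Thick P G (X⟦i⟧)
  | sum {X Y : P.C} : Thick P G X → Thick P G Y → Thick P G (X ⊞ Y)
  | smdLeft {X Y : P.C} : Thick P G (X ⊞ Y) → Thick P G X
  | ext (T : Triangle P.C) (hT : T ∈ distTriang P.C) :
      Thick P G T.obj₁ → Thick P G T.obj₂ → Thick P G T.obj₃

/-- `G` is a classical generator when the thick subcategory it generates is
the whole category. -/
def IsClassicalGenerator (P : Cat k n) (G : P.C) : Prop :=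
  ∀ X : P.C, Thick P G X

/-- A minimal classical generator: no proper direct summand is a classical
generator. -/
def IsMinimalGenerator (P : Cat k n) (G : P.C) : Prop :=
  IsClassicalGenerator P G ∧
    ∀ H H' : P.C, Nonempty (G ≅ H ⊞ H') → ¬ IsZero H' → ¬ IsClassicalGenerator P H

/-- A limit generator: a minimal classical generator all of whose
indecomposable direct summands are limit or double limit arcs, no two of which
cross after any suspension. -/
def IsLimitGenerator (P : Cat k n) (G : P.C) : Prop :=
  IsMinimalGenerator P G ∧
    ∃ (m : ℕ) (f : Fin m → E n),
      (∀ j, IsArc (f j)) ∧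
      Nonempty (G ≅ ⨁ fun j => P.obj (f j)) ∧
      (∀ j, IsLimitArc (f j) ∨ IsDoubleLimitArc (f j)) ∧
      (∀ j l (i : ℤ), ¬ Cross (f j) (shiftE i (f l)))

/-- Membership in `add (G[i] : i ∈ ℤ)`: direct summands of finite direct sums
of suspensions of `G`. -/
def AddMem (P : Cat k n) (G : P.C) (X : P.C) : Prop :=
  ∃ (m : ℕ) (g : Fin m → ℤ) (Y : P.C), Nonempty ((⨁ fun j => G⟦g j⟧) ≅ X ⊞ Y)

/-- Two objects are equivalent when the additive categories
`add (G[i] : i ∈ ℤ)` and `add (G'[i] : i ∈ ℤ)` are equivalent. -/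
def GenEquiv (P : Cat k n) (G G' : P.C) : Prop :=
  ∃ e : ObjectProperty.FullSubcategory (AddMem P G) ≌ ObjectProperty.FullSubcategory (AddMem P G'),
    e.functor.Additive

end PY

namespace PYDisc

/-- The `2n` marked points on the boundary of the disc `(D², Mₙ, ∅)`:
`o i` are the `∘`-points and `b i` the `•`-points, alternating. -/
inductive DPt (n : ℕ) : Type
  | o (i : Fin n) : DPt n
  | b (i : Fin n) : DPt n
deriving DecidableEq

/-- Position of a marked point of the disc on the boundary circle. -/
def dcoord {n : ℕ} : DPt n → ℚ
  | .o i => 2 * i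
  | .b i => 2 * i + 1

/-- Whether a marked point is a `∘`-point. -/
def isO {n : ℕ} : DPt n → Prop
  | .o _ => True
  | .b _ => False

/-- Whether a marked point is a `•`-point. -/
def isB {n : ℕ} : DPt n → Prop
  | .o _ => False
  | .b _ => True

/-- Potential arcs of the disc: unordered pairs of marked points (an arc in the
unpunctured disc is determined up to isotopy by its endpoints). -/
abbrev DE (n : ℕ) := Sym2 (DPt n)

def dlo {n : ℕ} (e : DE n) : ℚ :=
  Sym2.lift ⟨fun a b => min (dcoord a) (dcoord b), fun _ _ => min_comm _ _⟩ e

def dhi {n : ℕ} (e : DE n) : ℚ :=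
  Sym2.lift ⟨fun a b => max (dcoord a) (dcoord b), fun _ _ => max_comm _ _⟩ e

/-- Two arcs of the disc intersect (in the interior) when their endpoints
strictly interleave on the boundary circle. -/
def DCross {n : ℕ} (e f : DE n) : Prop :=
  (dlo e < dlo f ∧ dlo f < dhi e ∧ dhi e < dhi f) ∨
    (dlo f < dlo e ∧ dlo e < dhi f ∧ dhi f < dhi e)

/-- A `∘`-arc: an unordered pair of distinct `∘`-points.  (In the unpunctured
disc no such arc is contractible to a marked point.) -/
def IsOArc {n : ℕ} (e : DE n) : Prop :=
  ¬ e.IsDiag ∧ ∀ x ∈ e, isO x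

/-- A binding arc: an arc joining a `∘`-point to a `•`-point. -/
def IsBindingArc {n : ℕ} (e : DE n) : Prop :=
  ∃ x y : DPt n, e = s(x, y) ∧ isO x ∧ isB y

/-- An admissible collection of `∘`-arcs of the unpunctured disc: the arcs are
pairwise non-intersecting and do not enclose a subsurface with no boundary
segment on its boundary (since there are no punctures, the latter is
equivalent to the arcs not containing a cycle, i.e. forming a forest). -/
def IsAdmissibleColl {n : ℕ} (Γ : Finset (DE n)) : Prop :=
  (∀ e ∈ Γ, IsOArc e) ∧
  (∀ e ∈ Γ, ∀ f ∈ Γ, ¬ DCross e f) ∧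
  (SimpleGraph.fromEdgeSet (↑Γ : Set (Sym2 (DPt n)))).IsAcyclic

/-- An admissible `∘`-dissection: a maximal admissible collection of `∘`-arcs. -/
def IsODissection {n : ℕ} (Γ : Finset (DE n)) : Prop :=
  IsAdmissibleColl Γ ∧ ∀ Γ' : Finset (DE n), IsAdmissibleColl Γ' → Γ ⊆ Γ' → Γ' = Γ

/-- An extended admissible `∘`-dissection of `(D², Mₙ, ∅)`: an admissible
`∘`-dissection together with `n = |M•|` binding arcs, no two of which share a
`•`-endpoint, all arcs being pairwise distinct and non-intersecting. -/
def IsExtDissection {n : ℕ} (Δ : Finset (DE n)) : Prop :=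
  ∃ Γ B : Finset (DE n),
    Δ = Γ ∪ B ∧ Disjoint Γ B ∧
    IsODissection Γ ∧
    (∀ e ∈ B, IsBindingArc e) ∧
    B.card = n ∧
    (∀ e ∈ B, ∀ f ∈ B, e ≠ f → ∀ p : DPt n, isB p → ¬ (p ∈ e ∧ p ∈ f)) ∧
    (∀ e ∈ Δ, ∀ f ∈ Δ, ¬ DCross e f)

/-- Rotation of the marked disc by `t` steps (the mapping-class-group shadow of
an orientation-preserving homeomorphism of the marked disc). -/
def rot {n : ℕ} (t : Fin n) : DPt n → DPt n
  | .o i => .o (i + t)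
  | .b i => .b (i + t)

/-- Two collections of arcs of the marked disc are homeomorphic when one is
obtained from the other by a rotation of the marked disc. -/
def DissHomeo {n : ℕ} (Δ Δ' : Finset (DE n)) : Prop :=
  ∃ t : Fin n, Δ' = Δ.image (Sym2.map (rot t))

end PYDisc

/-!
A double limit arc has both endpoints at accumulation points, which the suspension fixes, so its
object `X` satisfies `X ≅ X⟦1⟧`. A degree-one isomorphism is invertible for the composition of
shifted homs, and its integer powers give a nonzero element in every degree, multiplying like
`x ^ i`. Composing with these isomorphisms identifies every graded piece with `Hom(X, X⟦1⟧)`,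
which is at most one-dimensional, so each power spans its degree.
-/

lemma exists_eq_smul_of_rank_le_one {K V : Type*} [Field K] [AddCommGroup V] [Module K V]
    (h : Module.rank K V ≤ 1) {v : V} (hv : v ≠ 0) (w : V) : ∃ c : K, w = c • v := by
  obtain ⟨v₀, hv₀⟩ := rank_le_one_iff.mp h
  obtain ⟨r, rfl⟩ := hv₀ v
  obtain ⟨s, rfl⟩ := hv₀ w
  exact ⟨s * r⁻¹, by rw [mul_smul, inv_smul_smul₀ (left_ne_zero_of_smul hv)]⟩

namespace CategoryTheory.ShiftedHom

variable {C : Type*} [Category C]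

section AddMonoid

variable {M : Type*} [AddMonoid M] [HasShift C M] {X : C}

/-- The degree is a parameter so that the `m`-fold composites of a hom of degree `1` (resp. `-1`)
land in degree `m` (resp. `-m`) definitionally. -/
noncomputable def iterComp {d : M} (f : ShiftedHom X X d) (deg : ℕ → M) (h₀ : deg 0 = 0)
    (hs : ∀ m, d + deg m = deg (m + 1)) : (m : ℕ) → ShiftedHom X X (deg m)
  | 0 => mk₀ _ h₀ (𝟙 X)
  | m + 1 => (iterComp f deg h₀ hs m).comp f (hs m)

end AddMonoid

section AddGroup

variable {M : Type*} [AddGroup M] [HasShift C M] {X Y Z : C}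

lemma comp_left_cancel {p q r : M} (a : ShiftedHom X Y p) [IsIso (a : X ⟶ Y⟦p⟧)]
    {b b' : ShiftedHom Y Z q} (h : q + p = r) (hb : a.comp b h = a.comp b' h) : b = b' := by
  simp only [comp, cancel_epi, cancel_mono] at hb
  exact (shiftFunctor C p).map_injective hb

lemma exists_comp_eq_mk₀_id_and_comp_eq_mk₀_id {p : M} (a : ShiftedHom X Y p)
    [IsIso (a : X ⟶ Y⟦p⟧)] :
    ∃ b : ShiftedHom Y X (-p), a.comp b (neg_add_cancel p) = mk₀ 0 rfl (𝟙 X) ∧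
      b.comp a (add_neg_cancel p) = mk₀ 0 rfl (𝟙 Y) := by
  obtain ⟨b, hb⟩ : ∃ b : ShiftedHom Y X (-p),
      (b⟦p⟧' : Y⟦p⟧ ⟶ X⟦-p⟧⟦p⟧) = inv a ≫ mk₀ 0 rfl (𝟙 X) ≫
        (shiftFunctorAdd' C (-p) p 0 (neg_add_cancel p)).hom.app X :=
    (shiftFunctor C p).map_surjective _
  have hab : a.comp b (neg_add_cancel p) = mk₀ 0 rfl (𝟙 X) := by
    simp [comp, hb]
  refine ⟨b, hab, comp_left_cancel a (zero_add p) ?_⟩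
  rw [comp_mk₀_id, ← comp_assoc a b a (neg_add_cancel p) (add_neg_cancel p) (by simp), hab,
    mk₀_id_comp]

end AddGroup

section Int

variable [HasShift C ℤ] {X : C}

/-- `a ^ i`, with the negative powers taken as powers of `b`; this is meant for `b = a⁻¹`. -/
noncomputable def zpowOf (a : ShiftedHom X X (1 : ℤ)) (b : ShiftedHom X X (-1 : ℤ)) :
    (i : ℤ) → ShiftedHom X X i
  | .ofNat m => iterComp a (fun m => m) rfl (fun _ => by omega) m
  | .negSucc m => iterComp b (fun m => -m) (by simp) (fun _ => by omega) (m + 1)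

variable {a : ShiftedHom X X (1 : ℤ)} {b : ShiftedHom X X (-1 : ℤ)}

lemma zpowOf_zero : zpowOf a b 0 = mk₀ 0 rfl (𝟙 X) := rfl

lemma zpowOf_comp_right (hba : b.comp a (add_neg_cancel 1) = mk₀ 0 rfl (𝟙 X))
    (i c : ℤ) (h : 1 + i = c) : (zpowOf a b i).comp a h = zpowOf a b c := by
  match i with
  | .ofNat m =>
    obtain rfl : c = .ofNat (m + 1) := by simp only [Int.ofNat_eq_natCast] at h ⊢; omega
    rfl
  | .negSucc 0 =>
    obtain rfl : c = 0 := by omega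
    rw [zpowOf, iterComp, iterComp, mk₀_id_comp]
    exact hba
  | .negSucc (m + 1) =>
    obtain rfl : c = .negSucc m := by omega
    rw [zpowOf, iterComp, comp_assoc _ b a _ (add_neg_cancel 1) (by omega), hba, comp_mk₀_id]
    rfl

lemma zpowOf_comp_left (hab : a.comp b (neg_add_cancel 1) = mk₀ 0 rfl (𝟙 X))
    (hba : b.comp a (add_neg_cancel 1) = mk₀ 0 rfl (𝟙 X))
    (i c : ℤ) (h : -1 + i = c) : (zpowOf a b i).comp b h = zpowOf a b c := by
  rw [← zpowOf_comp_right hba c i (by omega), comp_assoc _ a b _ (neg_add_cancel 1) (by omega),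
    hab, comp_mk₀_id]

lemma zpowOf_comp_zpowOf (hab : a.comp b (neg_add_cancel 1) = mk₀ 0 rfl (𝟙 X))
    (hba : b.comp a (add_neg_cancel 1) = mk₀ 0 rfl (𝟙 X))
    (i j c : ℤ) (h : j + i = c) : (zpowOf a b i).comp (zpowOf a b j) h = zpowOf a b c := by
  induction j using Int.induction_on generalizing c with
  | zero =>
    obtain rfl : c = i := by omega
    exact comp_mk₀_id _ 0 rfl
  | succ j ih =>
    rw [← zpowOf_comp_right hba j (j + 1) (add_comm 1 _),
      ← comp_assoc _ _ a rfl (add_comm 1 _) (by omega), ih _ rfl, zpowOf_comp_right hba]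
  | pred j ih =>
    rw [← zpowOf_comp_left hab hba (-j) (-j - 1) (by omega),
      ← comp_assoc _ _ b rfl (by omega) (by omega), ih _ rfl, zpowOf_comp_left hab hba]

end Int

end CategoryTheory.ShiftedHom

namespace CategoryTheory

open ShiftedHom

theorem exists_laurent_basis_of_iso_shift_one {K : Type*} [Field K] {C : Type*} [Category C]
    [Preadditive C] [Linear K C] [HasShift C ℤ] {X : C} (hX : ¬ IsZero X)
    (φ : X ≅ X⟦(1 : ℤ)⟧) (hrank : Module.rank K (X ⟶ X⟦(1 : ℤ)⟧) ≤ 1) :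
    ∃ g : ∀ i : ℤ, ShiftedHom X X i,
      g 0 = mk₀ (0 : ℤ) rfl (𝟙 X) ∧ (∀ i, g i ≠ 0) ∧
      (∀ i (f : ShiftedHom X X i), ∃ c : K, f = c • g i) ∧
      ∀ i j : ℤ, (g i).comp (g j) (add_comm j i) = g (i + j) := by
  obtain ⟨b, hab, hba⟩ := exists_comp_eq_mk₀_id_and_comp_eq_mk₀_id (φ.hom : ShiftedHom X X (1 : ℤ))
  have hmul := zpowOf_comp_zpowOf hab hba
  have hne : ∀ i, zpowOf φ.hom b i ≠ 0 := by
    intro i hi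
    have h0 := hmul i (-i) 0 (neg_add_cancel i)
    rw [hi, ShiftedHom.zero_comp, zpowOf_zero, ← mk₀_zero X X (0 : ℤ) rfl] at h0
    exact hX ((IsZero.iff_id_eq_zero X).mpr ((homEquiv 0 rfl).injective h0).symm)
  refine ⟨zpowOf φ.hom b, zpowOf_zero, hne, fun i f => ?_, fun i j => hmul i j _ _⟩
  obtain ⟨c, hc⟩ := exists_eq_smul_of_rank_le_one hrank (hne 1)
    (f.comp (zpowOf φ.hom b (1 - i)) (sub_add_cancel 1 i))
  refine ⟨c, ?_⟩
  calc f = (f.comp (zpowOf φ.hom b (1 - i)) (sub_add_cancel 1 i)).comp (zpowOf φ.hom b (i - 1))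
          (sub_add_cancel i 1) := by
        rw [comp_assoc f _ _ _ (show i - 1 + (1 - i) = 0 by omega) (by omega), hmul,
          zpowOf_zero, comp_mk₀_id]
    _ = c • zpowOf φ.hom b i := by rw [hc, smul_comp, hmul]

end CategoryTheory

lemma PY.shiftE_eq_self_of_isDoubleLimitArc {n : ℕ} {e : PY.E n} (he : PY.IsDoubleLimitArc e)
    (j : ℤ) : PY.shiftE j e = e := by
  induction e using Sym2.ind with
  | _ x y =>
    obtain ⟨_, hacc⟩ := he
    cases x with
    | pt => exact (hacc _ (Sym2.mem_mk_left _ _)).elim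
    | acc =>
      cases y with
      | pt => exact (hacc _ (Sym2.mem_mk_right _ _)).elim
      | acc => rfl

/-- The graded endomorphism ring of the indecomposable object of `C̄ₙ`
corresponding to a double limit arc is isomorphic, as a graded ring, to the
Laurent polynomial ring `k[x^{±1}]` with `x` concentrated in degree `−1`:
there is a family of generators `g i` of the degree-`i` components for all
`i ∈ ℤ`, multiplying as powers of a single invertible degree-`−1` variable,
with `g 0` the identity, each nonzero and spanning its (one-dimensional)
component. -/
theorem gradedEnd_doubleLimitArc
    (k : Type) [Field k] (n : ℕ) (P : PY.Cat k n)
    (e : PY.E n) (he : PY.IsDoubleLimitArc e) :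
    ∃ g : ∀ i : ℤ, (P.obj e ⟶ (P.obj e)⟦i⟧),
      (g 0 = ShiftedHom.mk₀ (0 : ℤ) rfl (𝟙 (P.obj e))) ∧
      (∀ i : ℤ, g i ≠ 0) ∧
      (∀ i : ℤ, ∀ f : P.obj e ⟶ (P.obj e)⟦i⟧, ∃ c : k, f = c • g i) ∧
      (∀ i j : ℤ,
        ShiftedHom.comp (g i) (g j) (show j + i = i + j by ring) = g (i + j)) := by
  obtain ⟨ψ⟩ := P.obj_shift e he.1
  rw [PY.shiftE_eq_self_of_isDoubleLimitArc he] at ψ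
  exact exists_laurent_basis_of_iso_shift_one (P.obj_indec e he.1).1 ψ.symm
    (P.hom_dim e e he.1 he.1)
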